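/- Suppose bρ̄ > ū² and n₁ := 2√(bρ̄ − ū²)/μ₀ is a positive integer. Then ν_{n₁}^p = ν_{−n₁}^p, and for every other pair of distinct nonzero integers n ≠ l (i.e. with (n,l) ∉ {(n₁,−n₁), (−n₁,n₁)}) one has ν_n^p ≠ ν_l^p. In particular, if bρ̄ ≤ ū² or 2√(bρ̄ − ū²)/μ₀ is not an integer, then the map n ↦ ν_n^p is injective on the nonzero integers. -/

import Mathlib

open scoped Classical
open Complex

/-- The parabolic branch of eigenvalues of the adjoint operator of the linearized
barotropic compressible Navier–Stokes system. -/
noncomputable def nuP (ρ u b μ : ℝ) (n : ℤ) : ℂ :=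
  if 4 * b * ρ ≤ μ ^ 2 * (n : ℝ) ^ 2 then
    (((-(μ * (n : ℝ) ^ 2) - |(n : ℝ)| * Real.sqrt (μ ^ 2 * (n : ℝ) ^ 2 - 4 * b * ρ)) / 2 : ℝ) : ℂ)
      + Complex.I * ((u * (n : ℝ) : ℝ) : ℂ)
  else
    ((-(μ * (n : ℝ) ^ 2) / 2 : ℝ) : ℂ)
      + Complex.I * ((u * (n : ℝ) - (n : ℝ) / 2 * Real.sqrt (4 * b * ρ - μ ^ 2 * (n : ℝ) ^ 2) : ℝ) : ℂ)

/-!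
Both branches of `ν_n^p` are one closed formula, since `√` vanishes on the negative reals:
`ν_n^p = (-μ₀n² - |n|√(μ₀²n² - 4bρ̄))/2 + i n (ū - √(4bρ̄ - μ₀²n²)/2)`.
The real part is strictly decreasing in `|n|`, so `ν_n^p = ν_l^p` with `n ≠ l` forces `l = -n`;
as `ν_{-n}^p` is the conjugate of `ν_n^p`, this happens exactly when
`√(4bρ̄ - μ₀²n²) = 2ū`, that is, when `μ₀|n| = 2√(bρ̄ - ū²)`.
-/

section

variable (ρ u b μ : ℝ)

theorem nuP_re (n : ℤ) :
    (nuP ρ u b μ n).re =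
      (-(μ * (n : ℝ) ^ 2) - |(n : ℝ)| * √(μ ^ 2 * (n : ℝ) ^ 2 - 4 * b * ρ)) / 2 := by
  unfold nuP
  split_ifs with h
  · simp only [add_re, ofReal_re, mul_re, I_re, I_im, ofReal_im]
    ring
  · simp only [add_re, ofReal_re, mul_re, I_re, I_im, ofReal_im,
      Real.sqrt_eq_zero'.mpr (by linarith : μ ^ 2 * (n : ℝ) ^ 2 - 4 * b * ρ ≤ 0)]
    ring

theorem nuP_im (n : ℤ) :
    (nuP ρ u b μ n).im = (n : ℝ) * (u - √(4 * b * ρ - μ ^ 2 * (n : ℝ) ^ 2) / 2) := by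
  unfold nuP
  split_ifs with h
  · simp only [add_im, ofReal_im, mul_im, I_re, I_im, ofReal_re,
      Real.sqrt_eq_zero'.mpr (by linarith : 4 * b * ρ - μ ^ 2 * (n : ℝ) ^ 2 ≤ 0)]
    ring
  · simp only [add_im, ofReal_im, mul_im, I_re, I_im, ofReal_re]
    ring

variable {ρ u b μ}

theorem strictAntiOn_nuP_re_profile (hμ : 0 < μ) :
    StrictAntiOn (fun t : ℝ => (-(μ * t ^ 2) - t * √(μ ^ 2 * t ^ 2 - 4 * b * ρ)) / 2)
      (Set.Ici 0) := by
  intro s (hs : 0 ≤ s) t _ hst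
  have hsq : μ * s ^ 2 < μ * t ^ 2 := by gcongr
  have hsqrt : s * √(μ ^ 2 * s ^ 2 - 4 * b * ρ) ≤ t * √(μ ^ 2 * t ^ 2 - 4 * b * ρ) := by
    gcongr
  simp only
  linarith

theorem abs_eq_abs_of_nuP_re_eq (hμ : 0 < μ) {n l : ℤ}
    (h : (nuP ρ u b μ n).re = (nuP ρ u b μ l).re) : |n| = |l| := by
  have key : |(n : ℝ)| = |(l : ℝ)| := by
    refine (strictAntiOn_nuP_re_profile (ρ := ρ) (b := b) hμ).injOn
      (Set.mem_Ici.mpr (abs_nonneg _)) (Set.mem_Ici.mpr (abs_nonneg _)) ?_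
    simpa only [nuP_re, sq_abs] using h
  exact_mod_cast key

theorem nuP_eq_nuP_iff (hu : 0 < u) (hμ : 0 < μ) {n l : ℤ} (hne : n ≠ l) :
    nuP ρ u b μ n = nuP ρ u b μ l ↔
      l = -n ∧ μ ^ 2 * (n : ℝ) ^ 2 = 4 * (b * ρ - u ^ 2) := by
  have h2u : (0 : ℝ) < 2 * u := by positivity
  constructor
  · intro h
    obtain rfl : l = -n := by
      rcases abs_eq_abs.mp (abs_eq_abs_of_nuP_re_eq hμ (congrArg re h)) with h' | h'
      · exact absurd h' hne
      · omega
    have hn : (n : ℝ) ≠ 0 := by exact_mod_cast (by omega : n ≠ 0)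
    have him := congrArg im h
    simp only [nuP_im, Int.cast_neg, neg_sq] at him
    have hsqrt : √(4 * b * ρ - μ ^ 2 * (n : ℝ) ^ 2) = 2 * u := by
      have hzero : (n : ℝ) * (u - √(4 * b * ρ - μ ^ 2 * (n : ℝ) ^ 2) / 2) = 0 := by linarith
      linarith [(mul_eq_zero.mp hzero).resolve_left hn]
    rw [Real.sqrt_eq_iff_mul_self_eq_of_pos h2u] at hsqrt
    exact ⟨rfl, by linarith⟩
  · rintro ⟨rfl, h⟩
    have hsqrt : √(4 * b * ρ - μ ^ 2 * (n : ℝ) ^ 2) = 2 * u :=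
      (Real.sqrt_eq_iff_mul_self_eq_of_pos h2u).mpr (by linarith)
    apply Complex.ext
    · simp only [nuP_re, Int.cast_neg, neg_sq, abs_neg]
    · simp only [nuP_im, Int.cast_neg, neg_sq, hsqrt]
      ring

end

theorem sq_mul_sq_eq_four_mul_iff {μ m c : ℝ} (hμ : 0 < μ) (hm : 0 < m) :
    μ ^ 2 * m ^ 2 = 4 * c ↔ m = 2 * √c / μ := by
  have hhalf : m * μ = 2 * √c ↔ √c = m * μ / 2 := by constructor <;> intro h <;> linarith
  rw [eq_div_iff hμ.ne', hhalf, Real.sqrt_eq_iff_mul_self_eq_of_pos (by positivity)]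
  constructor <;> intro h <;> linarith

theorem parabolic_eigenvalues_multiplicity_general (ρ u b μ : ℝ) (hu : 0 < u) (hμ : 0 < μ) :
    (∀ n₁ : ℤ, 0 < n₁ → u ^ 2 < b * ρ → (n₁ : ℝ) = 2 * Real.sqrt (b * ρ - u ^ 2) / μ →
      nuP ρ u b μ n₁ = nuP ρ u b μ (-n₁) ∧
      (∀ n l : ℤ, n ≠ 0 → l ≠ 0 → n ≠ l → ¬(n = n₁ ∧ l = -n₁) → ¬(n = -n₁ ∧ l = n₁) →
        nuP ρ u b μ n ≠ nuP ρ u b μ l)) ∧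
    ((b * ρ ≤ u ^ 2 ∨ ∀ m : ℤ, (m : ℝ) ≠ 2 * Real.sqrt (b * ρ - u ^ 2) / μ) →
      ∀ n l : ℤ, n ≠ 0 → l ≠ 0 → nuP ρ u b μ n = nuP ρ u b μ l → n = l) := by
  constructor
  · intro n₁ hn₁ _ hval
    have hE₁ := (sq_mul_sq_eq_four_mul_iff hμ (by exact_mod_cast hn₁)).mpr hval
    refine ⟨(nuP_eq_nuP_iff hu hμ (by omega)).mpr ⟨rfl, hE₁⟩, ?_⟩
    intro n l _ _ hne hpos hneg heq
    obtain ⟨rfl, hE⟩ := (nuP_eq_nuP_iff hu hμ hne).mp heq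
    have hsq : (n : ℝ) ^ 2 = (n₁ : ℝ) ^ 2 :=
      mul_left_cancel₀ (by positivity) (hE.trans hE₁.symm)
    rcases sq_eq_sq_iff_eq_or_eq_neg.mp (by exact_mod_cast hsq : n ^ 2 = n₁ ^ 2) with rfl | rfl
    · exact hpos ⟨rfl, rfl⟩
    · exact hneg ⟨rfl, neg_neg n₁⟩
  · intro hcond n l hn _ heq
    by_contra hne
    obtain ⟨rfl, hE⟩ := (nuP_eq_nuP_iff hu hμ hne).mp heq
    rcases hcond with hle | hnot
    · have : 0 < μ ^ 2 * (n : ℝ) ^ 2 := by positivity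
      linarith
    · have habs : (0 : ℝ) < |(n : ℝ)| := by positivity
      rw [← sq_abs (n : ℝ)] at hE
      exact hnot |n| (by exact_mod_cast (sq_mul_sq_eq_four_mul_iff hμ habs).mp hE)

/-- If `bρ̄ > ū²` and `n₁ = 2√(bρ̄ − ū²)/μ₀` is a positive integer, then
`ν_{n₁}^p = ν_{−n₁}^p` and all other pairs of distinct nonzero indices give distinct
parabolic eigenvalues.  In particular, if `bρ̄ ≤ ū²` or `2√(bρ̄ − ū²)/μ₀` is not an
integer, then `n ↦ ν_n^p` is injective on the nonzero integers. -/
theorem parabolic_eigenvalues_multiplicity (ρ u b μ : ℝ) (hρ : 0 < ρ) (hu : 0 < u)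
    (hb : 0 < b) (hμ : 0 < μ) :
    (∀ n₁ : ℤ, 0 < n₁ → u ^ 2 < b * ρ → (n₁ : ℝ) = 2 * Real.sqrt (b * ρ - u ^ 2) / μ →
      nuP ρ u b μ n₁ = nuP ρ u b μ (-n₁) ∧
      (∀ n l : ℤ, n ≠ 0 → l ≠ 0 → n ≠ l → ¬(n = n₁ ∧ l = -n₁) → ¬(n = -n₁ ∧ l = n₁) →
        nuP ρ u b μ n ≠ nuP ρ u b μ l)) ∧
    ((b * ρ ≤ u ^ 2 ∨ ∀ m : ℤ, (m : ℝ) ≠ 2 * Real.sqrt (b * ρ - u ^ 2) / μ) →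
      ∀ n l : ℤ, n ≠ 0 → l ≠ 0 → nuP ρ u b μ n = nuP ρ u b μ l → n = l) :=
  parabolic_eigenvalues_multiplicity_general ρ u b μ hu hμ
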